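/- For all integers s ≥ 0 and i ≥ 0 one has, as ideals of ℤ[G]: Fitt_i(N_s(τ_1,…,τ_s)) = (1) if i ≥ s; Fitt_i(N_s(τ_1,…,τ_s)) = 0 if s ≥ 1 and i = 0; and Fitt_i(N_s(τ_1,…,τ_s)) = (τ_1,…,τ_s)^{s−i} if 1 ≤ i < s. -/
import Mathlib


open MonoidAlgebra Finset

/-- The sum `ν_H = Σ_{σ ∈ H} σ` of the elements of a subgroup `H` in the group algebra. -/
noncomputable def nuElt (R : Type) [CommRing R] {G : Type} [CommGroup G] [Fintype G]
    (H : Subgroup G) : MonoidAlgebra R G :=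
  letI := Classical.decPred (· ∈ H)
  ∑ σ ∈ Finset.univ.filter (· ∈ H), MonoidAlgebra.of R G σ

/-- `Fitt_i(A)`: the ideal generated by the `(n-i) × (n-i)` minors of a matrix `A`
with `n` columns (so `Fitt_i(A) = (1)` for `i ≥ n`, and `(0)` if `A` has fewer than
`n - i` rows). -/
noncomputable def fittMat {R : Type} [CommRing R] {m n : Type} [Fintype m] [Fintype n]
    (A : Matrix m n R) (i : ℕ) : Ideal R :=
  Ideal.span {x : R |
    ∃ (r : Fin (Fintype.card n - i) → m) (c : Fin (Fintype.card n - i) → n),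
      x = (A.submatrix r c).det}

/-- The index type for the rows of `N_s`: pairs `l < l'`. -/
abbrev rowPairs (s : ℕ) := {p : Fin s × Fin s // p.1 < p.2}

/-- The matrix `N_s(t_1, …, t_s)`: row `(l, l')` has `-t_{l'}` in column `l`,
`t_l` in column `l'`, and `0` elsewhere. -/
noncomputable def Nmat {R : Type} [CommRing R] {s : ℕ} (t : Fin s → R) :
    Matrix (rowPairs s) (Fin s) R :=
  fun p l => if l = p.val.1 then -t p.val.2 else if l = p.val.2 then t p.val.1 else 0

/-- The matrix `M_s(ν_1, …, ν_s, τ_1, …, τ_s)`: `N_s(τ_1, …, τ_s)` with `s` extra rows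
appended, the `l`-th of which has `ν_l` in column `l` and `0` elsewhere. -/
noncomputable def Mmat {R : Type} [CommRing R] {s : ℕ} (ν t : Fin s → R) :
    Matrix (Fin s ⊕ rowPairs s) (Fin s) R :=
  Sum.elim (fun l l' => if l' = l then ν l else 0) (Nmat t)

/-- `I = I_1 × ⋯ × I_s` where `I_l` is the (possibly trivial) cyclic subgroup generated
by `σ l`: every element of `I` is, in a unique way, the product of elements of the
subgroups `⟨σ l⟩`. -/
def IsDecomp {G : Type} [CommGroup G] (I : Subgroup G) {s : ℕ} (σ : Fin s → G) : Prop :=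
  (∀ l, σ l ∈ I) ∧
    ∀ g ∈ I, ∃! x : ∀ l, Subgroup.zpowers (σ l), (∏ l, ((x l : G))) = g

/-- The ideal `Z_i` generated by the products `ν_{l_1} ⋯ ν_{l_{s-i}}` over all
`(s-i)`-element subsets `{l_1 < ⋯ < l_{s-i}}` of `{1, …, s}`. -/
noncomputable def Zideal {G : Type} [CommGroup G] [Fintype G] {s : ℕ} (σ : Fin s → G)
    (i : ℕ) : Ideal (MonoidAlgebra ℤ G) :=
  Ideal.span {x | ∃ T : Finset (Fin s), T.card = s - i ∧
    x = ∏ l ∈ T, nuElt ℤ (Subgroup.zpowers (σ l))}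

/-- The augmentation-type kernel ideal `𝓘_H = ker(ℤ[G] → ℤ[G/H])`. -/
noncomputable def kerIdeal {G : Type} [CommGroup G] [Fintype G] (H : Subgroup G) :
    Ideal (MonoidAlgebra ℤ G) :=
  RingHom.ker (MonoidAlgebra.mapDomainRingHom ℤ (QuotientGroup.mk' H))

section Aux4

open Finset

variable {R : Type} [CommRing R] {s : ℕ}

lemma fittMat_eq_span {m n : Type} [Fintype m] [Fintype n]
    (A : Matrix m n R) (i k : ℕ) (h : Fintype.card n - i = k) :
    fittMat A i = Ideal.span {x : R |
      ∃ (r : Fin k → m) (c : Fin k → n), x = (A.submatrix r c).det} := by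
  subst h; rfl

lemma Nmat_row_rel (t : Fin s → R) (p : rowPairs s) :
    ∑ l, Nmat t p l * t l = 0 := by
  have key : ∀ l, Nmat t p l * t l =
      (if l = p.val.1 then -(t p.val.2 * t p.val.1) else 0) +
      (if l = p.val.2 then t p.val.1 * t p.val.2 else 0) := by
    intro l
    have hne : p.val.1 ≠ p.val.2 := ne_of_lt p.2
    have hne' : p.val.2 ≠ p.val.1 := Ne.symm hne
    by_cases h1 : l = p.val.1
    · subst h1
      simp [Nmat, hne, hne'] <;> ring
    · by_cases h2 : l = p.val.2
      · subst h2
        simp [Nmat, hne, hne', h1] <;> ring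
      · simp [Nmat, h1, h2]
  rw [Finset.sum_congr rfl (fun l _ => key l), Finset.sum_add_distrib]
  rw [Finset.sum_ite_eq' Finset.univ p.val.1 (fun _ => -(t p.val.2 * t p.val.1)),
    Finset.sum_ite_eq' Finset.univ p.val.2 (fun _ => t p.val.1 * t p.val.2)]
  simp <;> ring

/-- Over the polynomial ring, any `s × s` minor of `Nmat X` vanishes. -/
lemma Nmat_generic_det_zero (hs : 0 < s)
    (r : Fin s → rowPairs s) (c : Fin s → Fin s) :
    (((Nmat (fun l => (MvPolynomial.X l : MvPolynomial (Fin s) ℤ))).submatrix r c)).det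
      = 0 := by
  classical
  set P := MvPolynomial (Fin s) ℤ with hP
  set X : Fin s → P := fun l => MvPolynomial.X l with hX
  set M := (Nmat X).submatrix r c with hM
  by_cases hc : Function.Injective c
  · have hb : Function.Bijective c := (Finite.injective_iff_bijective).mp hc
    have hmv : M.mulVec (fun j => X (c j)) = 0 := by
      funext i
      show ∑ j, M i j * X (c j) = 0
      have := Fintype.sum_bijective c hb
        (fun j => Nmat X (r i) (c j) * X (c j))
        (fun l => Nmat X (r i) l * X l) (fun x => rfl)
      calc ∑ j, M i j * X (c j)
          = ∑ l, Nmat X (r i) l * X l := this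
        _ = 0 := Nmat_row_rel X (r i)
    have hsmul : M.det • (fun j => X (c j)) = (0 : Fin s → P) := by
      calc M.det • (fun j => X (c j))
          = (M.det • (1 : Matrix (Fin s) (Fin s) P)).mulVec (fun j => X (c j)) := by
            rw [Matrix.smul_mulVec, Matrix.one_mulVec]
        _ = (M.adjugate * M).mulVec (fun j => X (c j)) := by rw [Matrix.adjugate_mul]
        _ = M.adjugate.mulVec (M.mulVec (fun j => X (c j))) := by
            rw [Matrix.mulVec_mulVec]
        _ = 0 := by rw [hmv, Matrix.mulVec_zero]
    have h0 : M.det * X (c ⟨0, hs⟩) = 0 := by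
      have := congrFun hsmul ⟨0, hs⟩
      simpa [smul_eq_mul] using this
    rcases mul_eq_zero.mp h0 with h | h
    · exact h
    · exact absurd h (MvPolynomial.X_ne_zero _)
  · rw [Function.not_injective_iff] at hc
    obtain ⟨j, j', hcc, hne⟩ := hc
    refine Matrix.det_zero_of_column_eq hne (fun i => ?_)
    show Nmat X (r i) (c j) = Nmat X (r i) (c j')
    rw [hcc]

/-- Mapping a minor of `Nmat` along a ring hom. -/
lemma Nmat_det_map {S : Type} [CommRing S] (φ : S →+* R) (tS : Fin s → S)
    {k : ℕ} (r : Fin k → rowPairs s) (c : Fin k → Fin s) :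
    ((Nmat (fun l => φ (tS l))).submatrix r c).det
      = φ (((Nmat tS).submatrix r c).det) := by
  rw [RingHom.map_det]
  congr 1
  funext i j
  show Nmat (fun l => φ (tS l)) (r i) (c j) = φ (Nmat tS (r i) (c j))
  simp only [Nmat, apply_ite φ, map_neg, map_zero]

/-- Determinant of a matrix with entries in `J` lies in `J ^ k`. -/
lemma det_mem_pow {k : ℕ} (J : Ideal R) (A : Matrix (Fin k) (Fin k) R)
    (h : ∀ i j, A i j ∈ J) : A.det ∈ J ^ k := by
  rw [Matrix.det_apply]
  refine Ideal.sum_mem _ (fun σ _ => ?_)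
  have hp : ∏ i, A (σ i) i ∈ J ^ k := by
    have := Ideal.prod_mem_prod (I := fun _ : Fin k => J)
      (x := fun i => A (σ i) i) (s := Finset.univ) (fun i _ => h (σ i) i)
    simpa [Finset.prod_const, Finset.card_univ] using this
  rw [Units.smul_def, zsmul_eq_mul]
  exact Ideal.mul_mem_left _ _ hp

/-- The key "chain" construction: any product of `k` of the `t l`'s, with `0 < k < s`,
is (up to sign) a `k × k` minor of `Nmat t`. -/
lemma chain_mem (t : Fin s → R) (k : ℕ) (hk0 : 0 < k) (hks : k < s)
    (f : Fin k → Fin s) :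
    (∏ j, t (f j)) ∈ Ideal.span {x : R |
      ∃ (r : Fin k → rowPairs s) (c : Fin k → Fin s),
        x = ((Nmat t).submatrix r c).det} := by
  classical
  set a : Fin k → Fin s := f ∘ (Tuple.sort f) with ha
  have hmono : Monotone a := Tuple.monotone_sort f
  have hprod : ∏ j, t (a j) = ∏ j, t (f j) :=
    Equiv.prod_comp (Tuple.sort f) (fun j => t (f j))
  -- successor function on Fin k
  set js : Fin k → Fin k := fun j => if h : (j : ℕ) + 1 < k then ⟨(j : ℕ) + 1, h⟩ else j
    with hjs
  set Pp : Fin k → Prop := fun j => ((j : ℕ) + 1 < k ∧ a (js j) ≠ a j) with hPp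
  set D : Finset (Fin k) := Finset.univ.filter (fun j => ¬ Pp j) with hD
  set E : Finset (Fin s) := (Finset.univ.image a)ᶜ with hE
  have hjs_val : ∀ j : Fin k, ((j : ℕ) + 1 < k) → ((js j : ℕ) = (j : ℕ) + 1) := by
    intro j h; simp [hjs, h]
  have hlt : ∀ j, Pp j → a j < a (js j) := by
    intro j hj
    refine lt_of_le_of_ne (hmono ?_) (Ne.symm hj.2)
    show j ≤ js j
    have := hjs_val j hj.1
    exact Fin.le_def.mpr (by omega)
  -- counting
  have hcard : D.card ≤ E.card := by
    have hsurj : Set.SurjOn (fun j => a (js j)) (Finset.univ.filter Pp : Finset (Fin k))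
        ((Finset.univ.image a).erase (a ⟨0, hk0⟩)) := by
      intro v hv
      simp only [Finset.coe_erase, Set.mem_diff, Finset.mem_coe, Finset.mem_image,
        Set.mem_singleton_iff] at hv
      obtain ⟨⟨j1, _, hj1⟩, hv0⟩ := hv
      have hQ : (Finset.univ.filter (fun j => a j = v)).Nonempty :=
        ⟨j1, by simp [hj1]⟩
      set j0 : Fin k := (Finset.univ.filter (fun j => a j = v)).min' hQ with hj0
      have hj0v : a j0 = v := by
        have := Finset.min'_mem (Finset.univ.filter (fun j => a j = v)) hQ
        simpa using this
      have hj0ne : (j0 : ℕ) ≠ 0 := by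
        intro h0
        apply hv0
        rw [← hj0v]
        congr 1
        exact Fin.ext h0
      set q : Fin k := ⟨(j0 : ℕ) - 1, by omega⟩ with hq
      have hq1 : (q : ℕ) + 1 < k := by
        have := j0.2; simp [hq]; omega
      have hjsq : js q = j0 := by
        apply Fin.ext
        rw [hjs_val q hq1]
        simp [hq]; omega
      have haq : a q ≠ v := by
        intro hqv
        have hqmem : q ∈ Finset.univ.filter (fun j => a j = v) := by simp [hqv]
        have := Finset.min'_le _ q hqmem
        rw [← hj0] at this
        have hlt' : q < j0 := by
          rw [Fin.lt_def]; simp [hq]; omega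
        exact absurd this (not_le.mpr hlt')
      refine ⟨q, ?_, by show a (js q) = v; rw [hjsq]; exact hj0v⟩
      simp only [Finset.coe_filter, Set.mem_setOf_eq, Finset.mem_univ, true_and]
      exact ⟨hq1, by rw [hjsq, hj0v]; exact Ne.symm haq⟩
    have h1 : ((Finset.univ.image a).erase (a ⟨0, hk0⟩)).card
        ≤ (Finset.univ.filter Pp).card :=
      Finset.card_le_card_of_surjOn _ hsurj
    have h2 : (Finset.univ.filter Pp).card + D.card = k := by
      rw [hD]
      have := Finset.card_filter_add_card_filter_not
        (s := (Finset.univ : Finset (Fin k))) (p := Pp)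
      simpa using this
    have h3 : E.card = s - (Finset.univ.image a).card := by
      rw [hE, Finset.card_compl]
      simp
    have h4 : a ⟨0, hk0⟩ ∈ Finset.univ.image a := by
      exact Finset.mem_image_of_mem a (Finset.mem_univ _)
    have h5 := Finset.card_erase_of_mem h4
    have h6 : (Finset.univ.image a).card ≤ s := by
      have := Finset.card_le_univ (Finset.univ.image a)
      simpa using this
    have h7 : 1 ≤ (Finset.univ.image a).card := Finset.card_pos.mpr ⟨_, h4⟩
    omega
  have hcard' : Fintype.card ↥D ≤ Fintype.card ↥E := by
    simpa [Fintype.card_coe] using hcard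
  obtain ⟨e⟩ := Function.Embedding.nonempty_of_card_le hcard'
  set c : Fin k → Fin s := fun j =>
    if h : Pp j then a (js j) else ((e ⟨j, by simp [hD, h]⟩ : ↥E) : Fin s) with hc
  have hEnotin : ∀ x : ↥D, ((e x : ↥E) : Fin s) ∉ Finset.univ.image a := by
    intro x
    have h' : ((e x : ↥E) : Fin s) ∈ ((Finset.univ.image a)ᶜ : Finset (Fin s)) := (e x).2
    exact Finset.mem_compl.mp h'
  have hEne : ∀ (x : ↥D) (j : Fin k), ((e x : ↥E) : Fin s) ≠ a j := by
    intro x j h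
    exact hEnotin x (h ▸ Finset.mem_image_of_mem a (Finset.mem_univ j))
  have hcpos : ∀ j (h : Pp j), c j = a (js j) := by
    intro j h; simp only [hc]; exact dif_pos h
  have hcneg : ∀ j (h : ¬ Pp j), c j = ((e ⟨j, by simp [hD, h]⟩ : ↥E) : Fin s) := by
    intro j h; simp only [hc]; exact dif_neg h
  have hP2 : ∀ j j' : Fin k, j ≤ j' → a j ≠ c j' := by
    intro j j' hjj
    by_cases h : Pp j'
    · rw [hcpos j' h]
      exact ne_of_lt (lt_of_le_of_lt (hmono hjj) (hlt j' h))
    · rw [hcneg j' h]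
      exact (hEne _ j).symm
  have hc_lt : ∀ u v : Fin k, u < v → c u ≠ c v := by
    intro u v huv heq
    by_cases h1 : Pp u <;> by_cases h2 : Pp v
    · rw [hcpos u h1, hcpos v h2] at heq
      have hle : js u ≤ v := by
        have := hjs_val u h1.1
        rw [Fin.le_def, this]
        exact Fin.lt_def.mp huv
      have : a (js u) < a (js v) := lt_of_le_of_lt (hmono hle) (hlt v h2)
      exact absurd heq (ne_of_lt this)
    · rw [hcpos u h1, hcneg v h2] at heq
      exact hEne _ _ heq.symm
    · rw [hcneg u h1, hcpos v h2] at heq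
      exact hEne _ _ heq
    · rw [hcneg u h1, hcneg v h2] at heq
      have h3 : u = v := congrArg Subtype.val (e.injective (Subtype.coe_injective heq))
      exact absurd h3 (ne_of_lt huv)
  have hc_inj : Function.Injective c := by
    intro u v heq
    rcases lt_trichotomy u v with h | h | h
    · exact absurd heq (hc_lt u v h)
    · exact h
    · exact absurd heq.symm (hc_lt v u h)
  have hne_ac : ∀ j, a j ≠ c j := fun j => hP2 j j le_rfl
  set r : Fin k → rowPairs s := fun j =>
    if h : a j < c j then ⟨(a j, c j), h⟩
    else ⟨(c j, a j), lt_of_le_of_ne (not_lt.mp h) (Ne.symm (hne_ac j))⟩ with hr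
  have hrpos : ∀ j (h : a j < c j), r j = ⟨(a j, c j), h⟩ := by
    intro j h; simp only [hr]; exact dif_pos h
  have hrneg : ∀ j (h : ¬ a j < c j), r j =
      ⟨(c j, a j), lt_of_le_of_ne (not_lt.mp h) (Ne.symm (hne_ac j))⟩ := by
    intro j h; simp only [hr]; exact dif_neg h
  set M := (Nmat t).submatrix r c with hM
  have hNzero : ∀ (p : rowPairs s) (l : Fin s),
      l ≠ p.val.1 → l ≠ p.val.2 → Nmat t p l = 0 := by
    intro p l h1 h2; simp [Nmat, h1, h2]
  have htri : M.BlockTriangular OrderDual.toDual := by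
    intro i j hij
    have hij' : i < j := hij
    show Nmat t (r i) (c j) = 0
    have hcc : c j ≠ c i := fun h => absurd (hc_inj h) (ne_of_gt hij')
    have hca : c j ≠ a i := (hP2 i j (le_of_lt hij')).symm
    by_cases h : a i < c i
    · rw [hrpos i h]
      exact hNzero _ _ hca hcc
    · rw [hrneg i h]
      exact hNzero _ _ hcc hca
  have hdiag : ∀ j, M j j = (if a j < c j then (1 : R) else -1) * t (a j) := by
    intro j
    show Nmat t (r j) (c j) = _
    by_cases h : a j < c j
    · rw [hrpos j h, if_pos h]
      have h1 : c j ≠ a j := (ne_of_lt h).symm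
      simp [Nmat, h1]
    · rw [hrneg j h, if_neg h]
      simp [Nmat] <;> ring
  have hdet : M.det = (∏ j, (if a j < c j then (1 : R) else -1)) * ∏ j, t (a j) := by
    rw [Matrix.det_of_lowerTriangular M htri]
    rw [Finset.prod_congr rfl (fun j _ => hdiag j)]
    rw [Finset.prod_mul_distrib]
  set u : R := ∏ j, (if a j < c j then (1 : R) else -1) with hu
  have huu : u * u = 1 := by
    have key : ∀ j : Fin k,
        (if a j < c j then (1 : R) else -1) * (if a j < c j then (1 : R) else -1)
          = 1 := by
      intro j; split_ifs <;> ring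
    rw [hu, ← Finset.prod_mul_distrib,
      Finset.prod_congr rfl (fun j _ => key j), Finset.prod_const_one]
  have hmem : M.det ∈ Ideal.span {x : R |
      ∃ (r : Fin k → rowPairs s) (c : Fin k → Fin s),
        x = ((Nmat t).submatrix r c).det} :=
    Ideal.subset_span ⟨r, c, rfl⟩
  have hfinal : ∏ j, t (f j) = u * M.det := by
    rw [hdet, ← mul_assoc, huu, one_mul, hprod]
  rw [hfinal]
  exact Ideal.mul_mem_left _ u hmem

/-- Monomial generation of powers of a span. -/
lemma span_range_pow_le (t : Fin s → R) (k : ℕ) (I : Ideal R)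
    (h : ∀ f : Fin k → Fin s, (∏ j, t (f j)) ∈ I) :
    Ideal.span (Set.range t) ^ k ≤ I := by
  -- first: span(range t)^k ≤ span of monomials of degree k
  suffices hmon : ∀ k : ℕ, Ideal.span (Set.range t) ^ k ≤
      Ideal.span {x : R | ∃ f : Fin k → Fin s, x = ∏ j, t (f j)} by
    refine le_trans (hmon k) ?_
    rw [Ideal.span_le]
    rintro x ⟨f, rfl⟩
    exact h f
  intro k
  induction k with
  | zero =>
    have h1 : (1 : R) ∈ Ideal.span {x : R | ∃ f : Fin 0 → Fin s, x = ∏ j, t (f j)} :=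
      Ideal.subset_span ⟨Fin.elim0, by simp⟩
    rw [pow_zero, Ideal.one_eq_top, (Ideal.eq_top_iff_one _).mpr h1]
  | succ n ih =>
    rw [pow_succ, mul_comm]
    calc Ideal.span (Set.range t) * Ideal.span (Set.range t) ^ n
        ≤ Ideal.span (Set.range t) *
          Ideal.span {x : R | ∃ f : Fin n → Fin s, x = ∏ j, t (f j)} :=
          Ideal.mul_mono_right ih
      _ ≤ Ideal.span {x : R | ∃ f : Fin (n + 1) → Fin s, x = ∏ j, t (f j)} := by
          rw [Ideal.span_mul_span']
          rw [Ideal.span_le]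
          rintro x ⟨u, ⟨l, rfl⟩, v, ⟨g, rfl⟩, rfl⟩
          refine Ideal.subset_span ⟨Fin.cons l g, ?_⟩
          rw [Fin.prod_univ_succ]
          simp
end Aux4

theorem statement4' {G : Type} [CommGroup G] [Fintype G] {s : ℕ} (σ : Fin s → G) :
    (∀ i : ℕ, s ≤ i →
      fittMat (Nmat (fun l => MonoidAlgebra.of ℤ G (σ l) - 1)) i = ⊤) ∧
    (1 ≤ s →
      fittMat (Nmat (fun l => MonoidAlgebra.of ℤ G (σ l) - 1)) 0 = ⊥) ∧
    (∀ i : ℕ, 1 ≤ i → i < s →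
      fittMat (Nmat (fun l => MonoidAlgebra.of ℤ G (σ l) - 1)) i
        = (Ideal.span (Set.range fun l => MonoidAlgebra.of ℤ G (σ l) - 1)) ^ (s - i)) := by
  classical
  set R := MonoidAlgebra ℤ G with hR
  set t : Fin s → R := fun l => MonoidAlgebra.of ℤ G (σ l) - 1 with ht
  refine ⟨?_, ?_, ?_⟩
  · -- i ≥ s : Fitt = ⊤
    intro i hi
    rw [fittMat_eq_span (Nmat t) i 0 (by simp; omega)]
    rw [Ideal.eq_top_iff_one]
    refine Ideal.subset_span ⟨Fin.elim0, Fin.elim0, ?_⟩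
    rw [Matrix.det_isEmpty]
  · -- i = 0, s ≥ 1 : Fitt = ⊥
    intro hs
    rw [fittMat_eq_span (Nmat t) 0 s (by simp)]
    rw [Ideal.span_eq_bot]
    rintro x ⟨r, c, rfl⟩
    set φ : MvPolynomial (Fin s) ℤ →+* R := (MvPolynomial.aeval t).toRingHom with hφ
    have hmap : t = fun l => φ (MvPolynomial.X l) := by
      funext l; simp [hφ]
    rw [hmap, Nmat_det_map φ _ r c, Nmat_generic_det_zero hs r c, map_zero]
  · -- 1 ≤ i < s
    intro i hi1 his
    have hk0 : 0 < s - i := by omega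
    have hks : s - i < s := by omega
    rw [fittMat_eq_span (Nmat t) i (s - i) (by simp)]
    apply le_antisymm
    · -- minors ⊆ J^(s-i)
      rw [Ideal.span_le]
      rintro x ⟨r, c, rfl⟩
      refine det_mem_pow _ _ (fun a b => ?_)
      show Nmat t (r a) (c b) ∈ _
      unfold Nmat
      split_ifs
      · exact neg_mem (Ideal.subset_span ⟨_, rfl⟩)
      · exact Ideal.subset_span ⟨_, rfl⟩
      · exact zero_mem _
    · -- J^(s-i) ⊆ minors
      refine span_range_pow_le t (s - i) _ (fun f => ?_)
      exact chain_mem t (s - i) hk0 hks f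

/-- for `τ_l = σ_l − 1` in `ℤ[G]`, `Fitt_i(N_s(τ_1,…,τ_s))` equals `(1)` if
`i ≥ s`, equals `0` if `s ≥ 1` and `i = 0`, and equals `(τ_1,…,τ_s)^{s-i}` if `1 ≤ i < s`. -/
theorem statement4 {G : Type} [CommGroup G] [Fintype G] {s : ℕ} (σ : Fin s → G) :
    (∀ i : ℕ, s ≤ i →
      fittMat (Nmat (fun l => MonoidAlgebra.of ℤ G (σ l) - 1)) i = ⊤) ∧
    (1 ≤ s →
      fittMat (Nmat (fun l => MonoidAlgebra.of ℤ G (σ l) - 1)) 0 = ⊥) ∧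
    (∀ i : ℕ, 1 ≤ i → i < s →
      fittMat (Nmat (fun l => MonoidAlgebra.of ℤ G (σ l) - 1)) i
        = (Ideal.span (Set.range fun l => MonoidAlgebra.of ℤ G (σ l) - 1)) ^ (s - i)) := by
  exact statement4' σ
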